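/- arXiv:2408.14671 — 2 statements merged into one kernel-verified Lean document; each statement's English description precedes it below -/
import Mathlib

section
/- Under the measurement-error model, the naive (uncorrected) score evaluated at the true parameters has nonzero expectation given explicitly by E[(Y − D·θ0 − Z'β0)(D − Z'γ0)] = τ0·β0'γ0. In particular, whenever β0'γ0 ≠ 0 the naive score fails the moment condition E[φ(W; θ0, η0)] = 0. -/
/-! Substituting `Z = X + A`, the two naive residuals become `U - β0'A` and `V - γ0'A`: the
error-free part of the covariates cancels against the model. Expanding the product, the
orthogonality of `U`, `V` and `A` kills every term except `E[(β0'A)(γ0'A)] = β0' E[AA'] γ0`,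
which is `τ0 β0'γ0` because the measurement error is isotropic. -/

open MeasureTheory Finset

section SecondMoments

variable {Ω ι : Type*} [MeasurableSpace Ω] {μ : Measure Ω} [Fintype ι]

theorem memLp_sum_const_mul {A : Ω → ι → ℝ} (hA : ∀ j, MemLp (fun ω => A ω j) 2 μ)
    (c : ι → ℝ) : MemLp (fun ω => ∑ j, c j * A ω j) 2 μ :=
  memLp_finsetSum _ fun j _ => (hA j).const_mul (c j)

theorem integral_sub_mul_sub {U f V g : Ω → ℝ} (hU : MemLp U 2 μ) (hf : MemLp f 2 μ)
    (hV : MemLp V 2 μ) (hg : MemLp g 2 μ) :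
    ∫ ω, (U ω - f ω) * (V ω - g ω) ∂μ
      = ∫ ω, U ω * V ω ∂μ - ∫ ω, U ω * g ω ∂μ - ∫ ω, f ω * V ω ∂μ + ∫ ω, f ω * g ω ∂μ := by
  have hUV : Integrable (fun ω => U ω * V ω) μ := hU.integrable_mul hV
  have hUg : Integrable (fun ω => U ω * g ω) μ := hU.integrable_mul hg
  have hfV : Integrable (fun ω => f ω * V ω) μ := hf.integrable_mul hV
  have hfg : Integrable (fun ω => f ω * g ω) μ := hf.integrable_mul hg
  calc ∫ ω, (U ω - f ω) * (V ω - g ω) ∂μ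
      = ∫ ω, (U ω * V ω - U ω * g ω - f ω * V ω) + f ω * g ω ∂μ := by
        congr 1; ext ω; ring
    _ = _ := by
      rw [integral_add ?_ hfg, integral_sub ?_ hfV, integral_sub hUV hUg]
      exacts [hUV.sub hUg, (hUV.sub hUg).sub hfV]

theorem integral_mul_sum_const_mul {U : Ω → ℝ} {A : Ω → ι → ℝ} (hU : MemLp U 2 μ)
    (hA : ∀ j, MemLp (fun ω => A ω j) 2 μ) (c : ι → ℝ) :
    ∫ ω, U ω * ∑ j, c j * A ω j ∂μ = ∑ j, c j * ∫ ω, U ω * A ω j ∂μ := by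
  simp_rw [mul_sum, mul_left_comm (U _)]
  have hUA (j : ι) : Integrable (fun ω => U ω * A ω j) μ := hU.integrable_mul (hA j)
  rw [integral_finsetSum _ fun j _ => (hUA j).const_mul (c j)]
  simp_rw [integral_const_mul]

theorem integral_sum_const_mul_mul {U : Ω → ℝ} {A : Ω → ι → ℝ} (hU : MemLp U 2 μ)
    (hA : ∀ j, MemLp (fun ω => A ω j) 2 μ) (c : ι → ℝ) :
    ∫ ω, (∑ j, c j * A ω j) * U ω ∂μ = ∑ j, c j * ∫ ω, U ω * A ω j ∂μ := by
  simp_rw [mul_comm _ (U _)]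
  exact integral_mul_sum_const_mul hU hA c

theorem integral_sum_const_mul_mul_sum_const_mul [DecidableEq ι] {A : Ω → ι → ℝ} {τ : ℝ}
    (hA : ∀ j, MemLp (fun ω => A ω j) 2 μ)
    (hAA : ∀ j k, ∫ ω, A ω j * A ω k ∂μ = if j = k then τ else 0) (b c : ι → ℝ) :
    ∫ ω, (∑ j, b j * A ω j) * (∑ k, c k * A ω k) ∂μ = τ * ∑ j, b j * c j := by
  have hcross (k : ι) : ∫ ω, (∑ j, b j * A ω j) * A ω k ∂μ = b k * τ := by
    rw [integral_sum_const_mul_mul (hA k) hA]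
    simp [hAA]
  rw [integral_mul_sum_const_mul (memLp_sum_const_mul hA b) hA, mul_sum]
  simp_rw [hcross]
  exact sum_congr rfl fun j _ => by ring

end SecondMoments

theorem naive_score_fails_moment_condition_general
    {Ω : Type*} [MeasurableSpace Ω] {μ : Measure Ω}
    {p : ℕ} (Y D U V : Ω → ℝ) (X A Z : Ω → Fin p → ℝ)
    (θ0 τ0 : ℝ) (β0 γ0 : Fin p → ℝ)
    (hτ0 : 0 < τ0)
    (hY : ∀ ω, Y ω = θ0 * D ω + (∑ j, β0 j * X ω j) + U ω)
    (hD : ∀ ω, D ω = (∑ j, γ0 j * X ω j) + V ω)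
    (hZ : ∀ ω j, Z ω j = X ω j + A ω j)
    -- square integrability of all the random variables involved
    (hL2U : MemLp U 2 μ) (hL2V : MemLp V 2 μ)
    (hL2A : ∀ j, MemLp (fun ω => A ω j) 2 μ)
    -- measurement-error moments: E[A] = 0 and E[AA'] = τ0 I
    (hAA : ∀ j k, ∫ ω, A ω j * A ω k ∂μ = if j = k then τ0 else 0)
    -- orthogonality moment conditions
    (hUV : ∫ ω, U ω * V ω ∂μ = 0)
    (hUA : ∀ j, ∫ ω, U ω * A ω j ∂μ = 0)
    (hVA : ∀ j, ∫ ω, V ω * A ω j ∂μ = 0) :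
    (∫ ω, (Y ω - D ω * θ0 - ∑ j, β0 j * Z ω j) * (D ω - ∑ j, γ0 j * Z ω j) ∂μ
        = τ0 * ∑ j, β0 j * γ0 j) ∧
    ((∑ j, β0 j * γ0 j) ≠ 0 →
      ∫ ω, (Y ω - D ω * θ0 - ∑ j, β0 j * Z ω j) * (D ω - ∑ j, γ0 j * Z ω j) ∂μ ≠ 0) := by
  have hZsum (c : Fin p → ℝ) (ω : Ω) :
      ∑ j, c j * Z ω j = ∑ j, c j * X ω j + ∑ j, c j * A ω j := by
    simp only [hZ, mul_add, sum_add_distrib]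
  have hresidualY (ω : Ω) :
      Y ω - D ω * θ0 - ∑ j, β0 j * Z ω j = U ω - ∑ j, β0 j * A ω j := by
    rw [hY ω, hZsum]; ring
  have hresidualD (ω : Ω) : D ω - ∑ j, γ0 j * Z ω j = V ω - ∑ j, γ0 j * A ω j := by
    rw [hZsum, hD ω]; ring
  have hmoment :
      ∫ ω, (Y ω - D ω * θ0 - ∑ j, β0 j * Z ω j) * (D ω - ∑ j, γ0 j * Z ω j) ∂μ
        = τ0 * ∑ j, β0 j * γ0 j := by
    simp_rw [hresidualY, hresidualD]
    rw [integral_sub_mul_sub hL2U (memLp_sum_const_mul hL2A β0) hL2V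
        (memLp_sum_const_mul hL2A γ0), integral_mul_sum_const_mul hL2U hL2A,
      integral_sum_const_mul_mul hL2V hL2A, integral_sum_const_mul_mul_sum_const_mul hL2A hAA]
    simp [hUV, hUA, hVA]
  exact ⟨hmoment, fun hβγ => hmoment ▸ mul_ne_zero hτ0.ne' hβγ⟩

/-- Under the measurement-error model, the naive (uncorrected) score
evaluated at the true parameters has nonzero expectation:
`E[(Y − D·θ0 − Z'β0)(D − Z'γ0)] = τ0·β0'γ0`.  In particular, whenever `β0'γ0 ≠ 0`
the naive score fails the moment condition. -/
theorem naive_score_fails_moment_condition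
    {Ω : Type*} [MeasurableSpace Ω] {μ : Measure Ω} [IsProbabilityMeasure μ]
    {p : ℕ} (Y D U V : Ω → ℝ) (X A Z : Ω → Fin p → ℝ)
    (θ0 τ0 : ℝ) (β0 γ0 : Fin p → ℝ)
    (hτ0 : 0 < τ0)
    (hY : ∀ ω, Y ω = θ0 * D ω + (∑ j, β0 j * X ω j) + U ω)
    (hD : ∀ ω, D ω = (∑ j, γ0 j * X ω j) + V ω)
    (hZ : ∀ ω j, Z ω j = X ω j + A ω j)
    -- square integrability of all the random variables involved
    (hL2Y : MemLp Y 2 μ) (hL2D : MemLp D 2 μ)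
    (hL2U : MemLp U 2 μ) (hL2V : MemLp V 2 μ)
    (hL2X : ∀ j, MemLp (fun ω => X ω j) 2 μ)
    (hL2A : ∀ j, MemLp (fun ω => A ω j) 2 μ)
    -- measurement-error moments: E[A] = 0 and E[AA'] = τ0 I
    (hA0 : ∀ j, ∫ ω, A ω j ∂μ = 0)
    (hAA : ∀ j k, ∫ ω, A ω j * A ω k ∂μ = if j = k then τ0 else 0)
    -- orthogonality moment conditions
    (hUV : ∫ ω, U ω * V ω ∂μ = 0)
    (hUX : ∀ j, ∫ ω, U ω * X ω j ∂μ = 0)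
    (hVX : ∀ j, ∫ ω, V ω * X ω j ∂μ = 0)
    (hUA : ∀ j, ∫ ω, U ω * A ω j ∂μ = 0)
    (hVA : ∀ j, ∫ ω, V ω * A ω j ∂μ = 0)
    (hDA : ∀ j, ∫ ω, D ω * A ω j ∂μ = 0)
    (hXA : ∀ j k, ∫ ω, X ω j * A ω k ∂μ = 0) :
    (∫ ω, (Y ω - D ω * θ0 - ∑ j, β0 j * Z ω j) * (D ω - ∑ j, γ0 j * Z ω j) ∂μ
        = τ0 * ∑ j, β0 j * γ0 j) ∧
    ((∑ j, β0 j * γ0 j) ≠ 0 →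
      ∫ ω, (Y ω - D ω * θ0 - ∑ j, β0 j * Z ω j) * (D ω - ∑ j, γ0 j * Z ω j) ∂μ ≠ 0) :=
  naive_score_fails_moment_condition_general Y D U V X A Z θ0 τ0 β0 γ0 hτ0 hY hD hZ hL2U hL2V hL2A
    hAA hUV hUA hVA
end

section
/- The gradient of the expected error-corrected score with respect to β vanishes at the true parameters; explicitly, as a vector identity in ℝ^p, E[(D − Z'γ0)·Z] + τ0·γ0 = 0. -/
open MeasureTheory Finset

section SecondMoments

variable {Ω ι : Type*} [MeasurableSpace Ω] {μ : Measure Ω}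

theorem integral_mul_add_of_memLp_two {f g h : Ω → ℝ} (hf : MemLp f 2 μ) (hg : MemLp g 2 μ)
    (hh : MemLp h 2 μ) :
    ∫ ω, f ω * (g ω + h ω) ∂μ = ∫ ω, f ω * g ω ∂μ + ∫ ω, f ω * h ω ∂μ := by
  simp only [mul_add]
  exact integral_add (hf.integrable_mul hg) (hf.integrable_mul hh)

theorem integral_sub_mul_of_memLp_two {f g h : Ω → ℝ} (hf : MemLp f 2 μ) (hg : MemLp g 2 μ)
    (hh : MemLp h 2 μ) :
    ∫ ω, (f ω - g ω) * h ω ∂μ = ∫ ω, f ω * h ω ∂μ - ∫ ω, g ω * h ω ∂μ := by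
  simp only [sub_mul]
  exact integral_sub (hf.integrable_mul hh) (hg.integrable_mul hh)

theorem integral_sum_mul_of_memLp_two (s : Finset ι) (c : ι → ℝ) {g : ι → Ω → ℝ} {f : Ω → ℝ}
    (hg : ∀ k, MemLp (g k) 2 μ) (hf : MemLp f 2 μ) :
    ∫ ω, (∑ k ∈ s, c k * g k ω) * f ω ∂μ = ∑ k ∈ s, c k * ∫ ω, g k ω * f ω ∂μ := by
  simp only [sum_mul, mul_assoc]
  rw [integral_finsetSum s fun k _ => by exact ((hg k).integrable_mul hf).const_mul (c k)]
  simp only [integral_const_mul]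

end SecondMoments

theorem corrected_score_beta_gradient_vanishes_general
    {Ω : Type*} [MeasurableSpace Ω] {μ : Measure Ω}
    {p : ℕ} (D V : Ω → ℝ) (X A Z : Ω → Fin p → ℝ)
    (τ0 : ℝ) (γ0 : Fin p → ℝ)
    (hD : ∀ ω, D ω = (∑ j, γ0 j * X ω j) + V ω)
    (hZ : ∀ ω j, Z ω j = X ω j + A ω j)
    -- square integrability of all the random variables involved
    (hL2V : MemLp V 2 μ)
    (hL2X : ∀ j, MemLp (fun ω => X ω j) 2 μ)
    (hL2A : ∀ j, MemLp (fun ω => A ω j) 2 μ)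
    -- measurement-error moments: E[A] = 0 and E[AA'] = τ0 I
    (hAA : ∀ j k, ∫ ω, A ω j * A ω k ∂μ = if j = k then τ0 else 0)
    -- orthogonality moment conditions
    (hVX : ∀ j, ∫ ω, V ω * X ω j ∂μ = 0)
    (hVA : ∀ j, ∫ ω, V ω * A ω j ∂μ = 0)
    (hXA : ∀ j k, ∫ ω, X ω j * A ω k ∂μ = 0) :
    ∀ j, (∫ ω, (D ω - ∑ k, γ0 k * Z ω k) * Z ω j ∂μ) + τ0 * γ0 j = 0 := by
  intro j
  -- The signal X'γ0 cancels from the residual; only the errors V and A'γ0 remain.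
  have hresidual : ∀ ω, D ω - ∑ k, γ0 k * Z ω k = V ω - ∑ k, γ0 k * A ω k := by
    intro ω
    simp only [hD, hZ, mul_add, sum_add_distrib]
    ring
  have hL2Z : MemLp (fun ω => Z ω j) 2 μ := by
    rw [show (fun ω => Z ω j) = fun ω => X ω j + A ω j from funext fun ω => hZ ω j]
    exact (hL2X j).add (hL2A j)
  have hVZ : ∫ ω, V ω * Z ω j ∂μ = 0 := by
    simp_rw [hZ]
    rw [integral_mul_add_of_memLp_two hL2V (hL2X j) (hL2A j), hVX, hVA, add_zero]
  have hAZ : ∀ k, ∫ ω, A ω k * Z ω j ∂μ = if k = j then τ0 else 0 := fun k => by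
    simp_rw [hZ]
    rw [integral_mul_add_of_memLp_two (hL2A k) (hL2X j) (hL2A j), hAA]
    simp_rw [mul_comm (A _ k) (X _ j)]
    rw [hXA, zero_add]
  have hL2AZ : MemLp (fun ω => ∑ k, γ0 k * A ω k) 2 μ :=
    memLp_finsetSum univ fun k _ => (hL2A k).const_mul (γ0 k)
  calc (∫ ω, (D ω - ∑ k, γ0 k * Z ω k) * Z ω j ∂μ) + τ0 * γ0 j
      = (∫ ω, V ω * Z ω j ∂μ - ∑ k, γ0 k * ∫ ω, A ω k * Z ω j ∂μ) + τ0 * γ0 j := by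
        simp_rw [hresidual]
        rw [integral_sub_mul_of_memLp_two hL2V hL2AZ hL2Z,
          integral_sum_mul_of_memLp_two univ γ0 hL2A hL2Z]
    _ = 0 := by simp [hVZ, hAZ, mul_comm]

/-- The gradient of the expected error-corrected score with respect to β
vanishes at the true parameters: as a vector identity in ℝ^p,
`E[(D − Z'γ0)·Z] + τ0·γ0 = 0`. -/
theorem corrected_score_beta_gradient_vanishes
    {Ω : Type*} [MeasurableSpace Ω] {μ : Measure Ω} [IsProbabilityMeasure μ]
    {p : ℕ} (Y D U V : Ω → ℝ) (X A Z : Ω → Fin p → ℝ)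
    (θ0 τ0 : ℝ) (β0 γ0 : Fin p → ℝ)
    (hτ0 : 0 < τ0)
    (hY : ∀ ω, Y ω = θ0 * D ω + (∑ j, β0 j * X ω j) + U ω)
    (hD : ∀ ω, D ω = (∑ j, γ0 j * X ω j) + V ω)
    (hZ : ∀ ω j, Z ω j = X ω j + A ω j)
    -- square integrability of all the random variables involved
    (hL2Y : MemLp Y 2 μ) (hL2D : MemLp D 2 μ)
    (hL2U : MemLp U 2 μ) (hL2V : MemLp V 2 μ)
    (hL2X : ∀ j, MemLp (fun ω => X ω j) 2 μ)
    (hL2A : ∀ j, MemLp (fun ω => A ω j) 2 μ)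
    -- measurement-error moments: E[A] = 0 and E[AA'] = τ0 I
    (hA0 : ∀ j, ∫ ω, A ω j ∂μ = 0)
    (hAA : ∀ j k, ∫ ω, A ω j * A ω k ∂μ = if j = k then τ0 else 0)
    -- orthogonality moment conditions
    (hUV : ∫ ω, U ω * V ω ∂μ = 0)
    (hUX : ∀ j, ∫ ω, U ω * X ω j ∂μ = 0)
    (hVX : ∀ j, ∫ ω, V ω * X ω j ∂μ = 0)
    (hUA : ∀ j, ∫ ω, U ω * A ω j ∂μ = 0)
    (hVA : ∀ j, ∫ ω, V ω * A ω j ∂μ = 0)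
    (hDA : ∀ j, ∫ ω, D ω * A ω j ∂μ = 0)
    (hXA : ∀ j k, ∫ ω, X ω j * A ω k ∂μ = 0) :
    ∀ j, (∫ ω, (D ω - ∑ k, γ0 k * Z ω k) * Z ω j ∂μ) + τ0 * γ0 j = 0 :=
  corrected_score_beta_gradient_vanishes_general D V X A Z τ0 γ0 hD hZ hL2V hL2X hL2A hAA hVX hVA
    hXA
end
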